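/- Let T: h → g be a relative Rota-Baxter operator of weight 1 with respect to an action (ρ,μ). Then (h,[·,·]_T,{{·,·,·}}_T) is a Lie-Yamaguti algebra (the descent Lie-Yamaguti algebra), where [u,v]_T := ρ(Tu)v − ρ(Tv)u + [u,v]_h and {{u,v,w}}_T := D(Tu,Tv)w + μ(Tv,Tw)u − μ(Tu,Tw)v + {{u,v,w}}_h; moreover T is a Lie-Yamaguti algebra homomorphism from (h,[·,·]_T,{{·,·,·}}_T) to (g,[·,·]_g,{{·,·,·}}_g). -/

import Mathlib

/-- A Lie-Yamaguti algebra structure on a `K`-module `V`, given by a bilinear bracket `br`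
and a trilinear bracket `tr`. -/
structure IsLYA (K : Type*) [Field K] (V : Type*) [AddCommGroup V] [Module K V]
    (br : V → V → V) (tr : V → V → V → V) : Prop where
  br_add_left : ∀ x y z : V, br (x + y) z = br x z + br y z
  br_smul_left : ∀ (a : K) (x y : V), br (a • x) y = a • br x y
  br_add_right : ∀ x y z : V, br x (y + z) = br x y + br x z
  br_smul_right : ∀ (a : K) (x y : V), br x (a • y) = a • br x y
  tr_add1 : ∀ x x' y z : V, tr (x + x') y z = tr x y z + tr x' y z
  tr_smul1 : ∀ (a : K) (x y z : V), tr (a • x) y z = a • tr x y z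
  tr_add2 : ∀ x y y' z : V, tr x (y + y') z = tr x y z + tr x y' z
  tr_smul2 : ∀ (a : K) (x y z : V), tr x (a • y) z = a • tr x y z
  tr_add3 : ∀ x y z z' : V, tr x y (z + z') = tr x y z + tr x y z'
  tr_smul3 : ∀ (a : K) (x y z : V), tr x y (a • z) = a • tr x y z
  br_skew : ∀ x y : V, br x y = - br y x
  tr_skew : ∀ x y z : V, tr x y z = - tr y x z
  ly1 : ∀ x y z : V,
    br (br x y) z + br (br y z) x + br (br z x) y + tr x y z + tr y z x + tr z x y = 0
  ly2 : ∀ x y z w : V, tr (br x y) z w + tr (br y z) x w + tr (br z x) y w = 0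
  ly3 : ∀ x y z w : V, tr x y (br z w) = br (tr x y z) w + br z (tr x y w)
  ly4 : ∀ x y z w t : V,
    tr x y (tr z w t) = tr (tr x y z) w t + tr z (tr x y w) t + tr z w (tr x y t)

/-- `D(x,y) = μ(y,x) - μ(x,y) + [ρ(x),ρ(y)] - ρ([x,y])`. -/
def Dmap {g V : Type*} [AddCommGroup V] (br : g → g → g)
    (ρ : g → V → V) (μ : g → g → V → V) (x y : g) (v : V) : V :=
  μ y x v - μ x y v + (ρ x (ρ y v) - ρ y (ρ x v)) - ρ (br x y) v

/-- A representation of a Lie-Yamaguti algebra `(g, br, tr)` on a `K`-module `V`. -/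
structure IsLYRep (K : Type*) [Field K] (g : Type*) [AddCommGroup g] [Module K g]
    (V : Type*) [AddCommGroup V] [Module K V]
    (br : g → g → g) (tr : g → g → g → g)
    (ρ : g → V → V) (μ : g → g → V → V) : Prop where
  ρ_add : ∀ (x y : g) (v : V), ρ (x + y) v = ρ x v + ρ y v
  ρ_smul : ∀ (a : K) (x : g) (v : V), ρ (a • x) v = a • ρ x v
  ρ_addv : ∀ (x : g) (u v : V), ρ x (u + v) = ρ x u + ρ x v
  ρ_smulv : ∀ (x : g) (a : K) (v : V), ρ x (a • v) = a • ρ x v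
  μ_add1 : ∀ (x y z : g) (v : V), μ (x + y) z v = μ x z v + μ y z v
  μ_smul1 : ∀ (a : K) (x y : g) (v : V), μ (a • x) y v = a • μ x y v
  μ_add2 : ∀ (x y z : g) (v : V), μ x (y + z) v = μ x y v + μ x z v
  μ_smul2 : ∀ (a : K) (x y : g) (v : V), μ x (a • y) v = a • μ x y v
  μ_addv : ∀ (x y : g) (u v : V), μ x y (u + v) = μ x y u + μ x y v
  μ_smulv : ∀ (x y : g) (a : K) (v : V), μ x y (a • v) = a • μ x y v
  rep1 : ∀ (x y z : g) (v : V), μ (br x y) z v - μ x z (ρ y v) + μ y z (ρ x v) = 0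
  rep2 : ∀ (x y z : g) (v : V), μ x (br y z) v - ρ y (μ x z v) + ρ z (μ x y v) = 0
  rep3 : ∀ (x y z : g) (v : V),
    ρ (tr x y z) v = Dmap br ρ μ x y (ρ z v) - ρ z (Dmap br ρ μ x y v)
  rep4 : ∀ (x y z w : g) (v : V),
    μ z w (μ x y v) - μ y w (μ x z v) - μ x (tr y z w) v + Dmap br ρ μ y z (μ x w v) = 0
  rep5 : ∀ (x y z w : g) (v : V),
    μ (tr x y z) w v + μ z (tr x y w) v
      = Dmap br ρ μ x y (μ z w v) - μ z w (Dmap br ρ μ x y v)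

/-- An action of a Lie-Yamaguti algebra `(g, brg, trg)` on a Lie-Yamaguti algebra
`(h, brh, trh)`: a representation valued in central elements annihilating all brackets. -/
structure IsLYAction (K : Type*) [Field K] (g : Type*) [AddCommGroup g] [Module K g]
    (h : Type*) [AddCommGroup h] [Module K h]
    (brg : g → g → g) (trg : g → g → g → g)
    (brh : h → h → h) (trh : h → h → h → h)
    (ρ : g → h → h) (μ : g → g → h → h) : Prop where
  rep : IsLYRep K g h brg trg ρ μ
  ρ_cent_br : ∀ (x : g) (u v : h), brh (ρ x u) v = 0
  ρ_cent_tr1 : ∀ (x : g) (u v w : h), trh (ρ x u) v w = 0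
  ρ_cent_tr3 : ∀ (x : g) (u v w : h), trh v w (ρ x u) = 0
  μ_cent_br : ∀ (x y : g) (u v : h), brh (μ x y u) v = 0
  μ_cent_tr1 : ∀ (x y : g) (u v w : h), trh (μ x y u) v w = 0
  μ_cent_tr3 : ∀ (x y : g) (u v w : h), trh v w (μ x y u) = 0
  ρ_ann_br : ∀ (x : g) (u v : h), ρ x (brh u v) = 0
  ρ_ann_tr : ∀ (x : g) (u v w : h), ρ x (trh u v w) = 0
  μ_ann_br : ∀ (x y : g) (u v : h), μ x y (brh u v) = 0
  μ_ann_tr : ∀ (x y : g) (u v w : h), μ x y (trh u v w) = 0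

/-- Relative Rota-Baxter operator of weight 1 from `(h, brh, trh)` to `(g, brg, trg)`
with respect to the action `(ρ, μ)`. -/
def IsRelRB (K : Type*) [Field K] {g h : Type*} [AddCommGroup g] [Module K g]
    [AddCommGroup h] [Module K h]
    (brg : g → g → g) (trg : g → g → g → g)
    (brh : h → h → h) (trh : h → h → h → h)
    (ρ : g → h → h) (μ : g → g → h → h) (T : h →ₗ[K] g) : Prop :=
  (∀ u v : h, brg (T u) (T v) = T (ρ (T u) v - ρ (T v) u + brh u v)) ∧
  (∀ u v w : h, trg (T u) (T v) (T w)
    = T (Dmap brg ρ μ (T u) (T v) w + μ (T v) (T w) u - μ (T u) (T w) v + trh u v w))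

/-- Binary bracket of the semidirect product Lie-Yamaguti algebra `g ⋉ h`. -/
def sdBr {g h : Type*} [AddCommGroup g] [AddCommGroup h]
    (brg : g → g → g) (brh : h → h → h) (ρ : g → h → h) (p q : g × h) : g × h :=
  (brg p.1 q.1, ρ p.1 q.2 - ρ q.1 p.2 + brh p.2 q.2)

/-- Ternary bracket of the semidirect product Lie-Yamaguti algebra `g ⋉ h`. -/
def sdTr {g h : Type*} [AddCommGroup g] [AddCommGroup h]
    (brg : g → g → g) (trg : g → g → g → g) (trh : h → h → h → h)
    (ρ : g → h → h) (μ : g → g → h → h) (p q r : g × h) : g × h :=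
  (trg p.1 q.1 r.1,
    Dmap brg ρ μ p.1 q.1 r.2 + μ q.1 r.1 p.2 - μ p.1 r.1 q.2 + trh p.2 q.2 r.2)

/-- Nijenhuis operator on a Lie-Yamaguti algebra. -/
def IsNijenhuis {V : Type*} [AddCommGroup V]
    (br : V → V → V) (tr : V → V → V → V) (N : V → V) : Prop :=
  (∀ x y : V, br (N x) (N y) = N (br (N x) y + br x (N y) - N (br x y))) ∧
  (∀ x y z : V, tr (N x) (N y) (N z)
    = N (tr (N x) (N y) z + tr (N x) y (N z) + tr x (N y) (N z)
      - N (tr (N x) y z) - N (tr x (N y) z) - N (tr x y (N z)) + N (N (tr x y z))))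

/-- The associator `(x,y,z) = (x*y)*z - x*(y*z)`. -/
def postAssoc {V : Type*} [AddCommGroup V] (star : V → V → V) (x y z : V) : V :=
  star (star x y) z - star x (star y z)

/-- The sub-adjacent binary bracket `[x,y]_C = x*y - y*x + x·y`. -/
def postSubBr {V : Type*} [AddCommGroup V] (dot star : V → V → V) (x y : V) : V :=
  star x y - star y x + dot x y

/-- `{x,y,z}_D = {z,y,x} - {z,x,y} + (y,x,z) - (x,y,z) - (x·y)*z`. -/
def postDbr {V : Type*} [AddCommGroup V] (dot star : V → V → V)
    (curly : V → V → V → V) (x y z : V) : V :=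
  curly z y x - curly z x y + postAssoc star y x z - postAssoc star x y z
    - star (dot x y) z

/-- The sub-adjacent ternary bracket
`{{x,y,z}}_C = {x,y,z}_D + {x,y,z} - {y,x,z} + ⟨x,y,z⟩`. -/
def postSubTr {V : Type*} [AddCommGroup V] (dot star : V → V → V)
    (curly ang : V → V → V → V) (x y z : V) : V :=
  postDbr dot star curly x y z + curly x y z - curly y x z + ang x y z

/-- A post-Lie-Yamaguti algebra structure `(A, ·, *, {·,·,·}, ⟨·,·,·⟩)`. -/
structure IsPostLYA (K : Type*) [Field K] (V : Type*) [AddCommGroup V] [Module K V]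
    (dot star : V → V → V) (curly ang : V → V → V → V) : Prop where
  lya : IsLYA K V dot ang
  star_add_left : ∀ x y z : V, star (x + y) z = star x z + star y z
  star_smul_left : ∀ (a : K) (x y : V), star (a • x) y = a • star x y
  star_add_right : ∀ x y z : V, star x (y + z) = star x y + star x z
  star_smul_right : ∀ (a : K) (x y : V), star x (a • y) = a • star x y
  curly_add1 : ∀ x x' y z : V, curly (x + x') y z = curly x y z + curly x' y z
  curly_smul1 : ∀ (a : K) (x y z : V), curly (a • x) y z = a • curly x y z
  curly_add2 : ∀ x y y' z : V, curly x (y + y') z = curly x y z + curly x y' z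
  curly_smul2 : ∀ (a : K) (x y z : V), curly x (a • y) z = a • curly x y z
  curly_add3 : ∀ x y z z' : V, curly x y (z + z') = curly x y z + curly x y z'
  curly_smul3 : ∀ (a : K) (x y z : V), curly x y (a • z) = a • curly x y z
  post1 : ∀ x y z w : V,
    curly z (postSubBr dot star x y) w = curly (star y z) x w - curly (star x z) y w
  post2 : ∀ x y z w : V,
    curly x y (postSubBr dot star z w) = star z (curly x y w) - star w (curly x y z)
  post3 : ∀ x y z w : V,
    star (postSubTr dot star curly ang x y z) w
      = postDbr dot star curly x y (star z w) - star z (postDbr dot star curly x y w)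
  post4 : ∀ x y z w t : V,
    curly x y (postSubTr dot star curly ang z w t)
      = curly (curly x y z) w t - curly (curly x y w) z t
        + curly z w (postDbr dot star curly x y t)
  post5 : ∀ x y z w t : V,
    curly x y (postDbr dot star curly z w t)
      = curly (postDbr dot star curly x y z) w t
        + curly z (postSubTr dot star curly ang x y w) t
        + curly z w (postSubTr dot star curly ang x y t)
  post6a : ∀ x y z : V, dot (star x y) z = 0
  post6b : ∀ x y z w : V, ang (star x y) z w = 0
  post6c : ∀ x y z w : V, ang z w (star x y) = 0
  post7a : ∀ x y z : V, star x (dot y z) = 0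
  post7b : ∀ x y z w : V, curly (dot x y) z w = 0
  post8a : ∀ x z w t : V, star x (ang z w t) = 0
  post8b : ∀ x y z w t : V, curly (ang z w t) x y = 0

/-- The descent binary bracket `[u,v]_T = ρ(Tu)v - ρ(Tv)u + [u,v]_h`. -/
def brT {K : Type*} [Field K] {g h : Type*} [AddCommGroup g] [Module K g]
    [AddCommGroup h] [Module K h]
    (brh : h → h → h) (ρ : g → h → h) (T : h →ₗ[K] g) (u v : h) : h :=
  ρ (T u) v - ρ (T v) u + brh u v

/-- The descent ternary bracket
`{{u,v,w}}_T = D(Tu,Tv)w + μ(Tv,Tw)u - μ(Tu,Tw)v + {{u,v,w}}_h`. -/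
def trT {K : Type*} [Field K] {g h : Type*} [AddCommGroup g] [Module K g]
    [AddCommGroup h] [Module K h]
    (brg : g → g → g) (trh : h → h → h → h)
    (ρ : g → h → h) (μ : g → g → h → h) (T : h →ₗ[K] g) (u v w : h) : h :=
  Dmap brg ρ μ (T u) (T v) w + μ (T v) (T w) u - μ (T u) (T w) v + trh u v w

/-- `ρ_T(u)(x) = [Tu, x]_g + T(ρ(x)u)`. -/
def rhoT {K : Type*} [Field K] {g h : Type*} [AddCommGroup g] [Module K g]
    [AddCommGroup h] [Module K h]
    (brg : g → g → g) (ρ : g → h → h) (T : h →ₗ[K] g) (u : h) (x : g) : g :=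
  brg (T u) x + T (ρ x u)

/-- `μ_T(u,v)(x) = {{x,Tu,Tv}}_g - T(D(x,Tu)v - μ(x,Tv)u)`. -/
def muT {K : Type*} [Field K] {g h : Type*} [AddCommGroup g] [Module K g]
    [AddCommGroup h] [Module K h]
    (brg : g → g → g) (trg : g → g → g → g)
    (ρ : g → h → h) (μ : g → g → h → h) (T : h →ₗ[K] g) (u v : h) (x : g) : g :=
  trg x (T u) (T v) - T (Dmap brg ρ μ x (T u) v - μ x (T v) u)

/-- `D_T(u,v)(x) = {{Tu,Tv,x}}_g - T(μ(Tv,x)u - μ(Tu,x)v)`. -/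
def DT {K : Type*} [Field K] {g h : Type*} [AddCommGroup g] [Module K g]
    [AddCommGroup h] [Module K h]
    (trg : g → g → g → g) (μ : g → g → h → h) (T : h →ₗ[K] g) (u v : h) (x : g) : g :=
  trg (T u) (T v) x - T (μ (T v) x u - μ (T u) x v)

/-!
The map `u ↦ (T u, u)` identifies `h` with the graph of `T` inside the semidirect product
`g ⋉ h`. The two Rota-Baxter identities say precisely that this map carries the descent brackets
to the semidirect product brackets, so `h` inherits the Lie-Yamaguti identities from `g ⋉ h`;
read in the first component, the same identities say that `T` is a homomorphism. That `g ⋉ h`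
is a Lie-Yamaguti algebra is a direct computation: the identities of `g` and `h` handle the pure
parts, the representation axioms handle the mixed ones, and every term in which `h`'s brackets
meet the action vanishes because the action is central and kills brackets.
-/

namespace IsLYA

variable {K V W : Type*} [Field K] [AddCommGroup V] [Module K V] [AddCommGroup W] [Module K W]
  {br : V → V → V} {tr : V → V → V → V}

theorem of_injective {br' : W → W → W} {tr' : W → W → W → W} (hW : IsLYA K W br' tr')
    (f : V →ₗ[K] W) (hf : Function.Injective f)
    (hbr : ∀ x y, f (br x y) = br' (f x) (f y))
    (htr : ∀ x y z, f (tr x y z) = tr' (f x) (f y) (f z)) :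
    IsLYA K V br tr where
  br_add_left x y z := hf <| by simpa only [map_add, hbr] using hW.br_add_left ..
  br_smul_left a x y := hf <| by simpa only [map_smul, hbr] using hW.br_smul_left ..
  br_add_right x y z := hf <| by simpa only [map_add, hbr] using hW.br_add_right ..
  br_smul_right a x y := hf <| by simpa only [map_smul, hbr] using hW.br_smul_right ..
  tr_add1 x x' y z := hf <| by simpa only [map_add, htr] using hW.tr_add1 ..
  tr_smul1 a x y z := hf <| by simpa only [map_smul, htr] using hW.tr_smul1 ..
  tr_add2 x y y' z := hf <| by simpa only [map_add, htr] using hW.tr_add2 ..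
  tr_smul2 a x y z := hf <| by simpa only [map_smul, htr] using hW.tr_smul2 ..
  tr_add3 x y z z' := hf <| by simpa only [map_add, htr] using hW.tr_add3 ..
  tr_smul3 a x y z := hf <| by simpa only [map_smul, htr] using hW.tr_smul3 ..
  br_skew x y := hf <| by simpa only [map_neg, hbr] using hW.br_skew ..
  tr_skew x y z := hf <| by simpa only [map_neg, htr] using hW.tr_skew ..
  ly1 x y z := hf <| by simpa only [map_add, map_zero, hbr, htr] using hW.ly1 ..
  ly2 x y z w := hf <| by simpa only [map_add, map_zero, hbr, htr] using hW.ly2 ..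
  ly3 x y z w := hf <| by simpa only [map_add, hbr, htr] using hW.ly3 ..
  ly4 x y z w t := hf <| by simpa only [map_add, htr] using hW.ly4 ..

variable (L : IsLYA K V br tr)
include L

theorem br_sub_left (x y z : V) : br (x - y) z = br x z - br y z :=
  (AddMonoidHom.mk' (br · z) (L.br_add_left · · z)).map_sub x y

theorem br_sub_right (x y z : V) : br x (y - z) = br x y - br x z :=
  (AddMonoidHom.mk' (br x) (L.br_add_right x)).map_sub y z

theorem tr_sub1 (x x' y z : V) : tr (x - x') y z = tr x y z - tr x' y z :=
  (AddMonoidHom.mk' (tr · y z) (L.tr_add1 · · y z)).map_sub x x'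

theorem tr_sub2 (x y y' z : V) : tr x (y - y') z = tr x y z - tr x y' z :=
  (AddMonoidHom.mk' (tr x · z) (L.tr_add2 x · · z)).map_sub y y'

theorem tr_sub3 (x y z z' : V) : tr x y (z - z') = tr x y z - tr x y z' :=
  (AddMonoidHom.mk' (tr x y) (L.tr_add3 x y)).map_sub z z'

end IsLYA

namespace IsLYRep

variable {K g V : Type*} [Field K] [AddCommGroup g] [Module K g] [AddCommGroup V] [Module K V]
  {br : g → g → g} {tr : g → g → g → g} {ρ : g → V → V} {μ : g → g → V → V}
  (R : IsLYRep K g V br tr ρ μ)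
include R

theorem ρ_zero (v : V) : ρ 0 v = 0 :=
  (AddMonoidHom.mk' (ρ · v) (R.ρ_add · · v)).map_zero

theorem ρ_neg (x : g) (v : V) : ρ (-x) v = -ρ x v :=
  (AddMonoidHom.mk' (ρ · v) (R.ρ_add · · v)).map_neg x

theorem ρ_zerov (x : g) : ρ x (0 : V) = 0 :=
  (AddMonoidHom.mk' (ρ x) (R.ρ_addv x)).map_zero

theorem ρ_subv (x : g) (u v : V) : ρ x (u - v) = ρ x u - ρ x v :=
  (AddMonoidHom.mk' (ρ x) (R.ρ_addv x)).map_sub u v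

theorem μ_subv (x y : g) (u v : V) : μ x y (u - v) = μ x y u - μ x y v :=
  (AddMonoidHom.mk' (μ x y) (R.μ_addv x y)).map_sub u v

end IsLYRep

namespace IsLYAction

variable {K g h : Type*} [Field K] [AddCommGroup g] [Module K g] [AddCommGroup h] [Module K h]
  {brg : g → g → g} {trg : g → g → g → g} {brh : h → h → h} {trh : h → h → h → h}
  {ρ : g → h → h} {μ : g → g → h → h}

section Centrality

variable (hh : IsLYA K h brh trh) (A : IsLYAction K g h brg trg brh trh ρ μ)
include hh A

theorem ρ_cent_br_right (x : g) (u v : h) : brh v (ρ x u) = 0 := by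
  rw [hh.br_skew, A.ρ_cent_br, neg_zero]

theorem μ_cent_br_right (x y : g) (u v : h) : brh v (μ x y u) = 0 := by
  rw [hh.br_skew, A.μ_cent_br, neg_zero]

theorem ρ_cent_tr2 (x : g) (u v w : h) : trh v (ρ x u) w = 0 := by
  rw [hh.tr_skew, A.ρ_cent_tr1, neg_zero]

theorem μ_cent_tr2 (x y : g) (u v w : h) : trh v (μ x y u) w = 0 := by
  rw [hh.tr_skew, A.μ_cent_tr1, neg_zero]

end Centrality

variable (hg : IsLYA K g brg trg) (hh : IsLYA K h brh trh)
  (A : IsLYAction K g h brg trg brh trh ρ μ)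
include hg hh A

theorem semidirect_ly1 (p q r : g × h) :
    sdBr brg brh ρ (sdBr brg brh ρ p q) r + sdBr brg brh ρ (sdBr brg brh ρ q r) p
      + sdBr brg brh ρ (sdBr brg brh ρ r p) q + sdTr brg trg trh ρ μ p q r
      + sdTr brg trg trh ρ μ q r p + sdTr brg trg trh ρ μ r p q = 0 := by
  refine Prod.ext (hg.ly1 ..) ?_
  simp only [sdBr, sdTr, Dmap, Prod.snd_add, Prod.snd_zero]
  linear_combination (norm := skip) hh.ly1 p.2 q.2 r.2
  simp only [A.rep.ρ_addv, A.rep.ρ_subv, hh.br_add_left, hh.br_sub_left, A.ρ_cent_br,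
    A.ρ_ann_br]
  abel

theorem semidirect_ly2 (p q r s : g × h) :
    sdTr brg trg trh ρ μ (sdBr brg brh ρ p q) r s
      + sdTr brg trg trh ρ μ (sdBr brg brh ρ q r) p s
      + sdTr brg trg trh ρ μ (sdBr brg brh ρ r p) q s = 0 := by
  refine Prod.ext (hg.ly2 ..) ?_
  obtain R := A.rep
  simp only [sdBr, sdTr, Prod.snd_add, Prod.snd_zero]
  linear_combination (norm := skip)
    R.rep2 r.1 p.1 q.1 s.2 + R.rep2 p.1 q.1 r.1 s.2 + R.rep2 q.1 r.1 p.1 s.2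
      - R.rep1 p.1 q.1 r.1 s.2 - R.rep1 q.1 r.1 p.1 s.2 - R.rep1 r.1 p.1 q.1 s.2
      - R.rep1 p.1 q.1 s.1 r.2 - R.rep1 q.1 r.1 s.1 p.2 - R.rep1 r.1 p.1 s.1 q.2
      + R.rep3 p.1 q.1 r.1 s.2 + R.rep3 q.1 r.1 p.1 s.2 + R.rep3 r.1 p.1 q.1 s.2
      - congrArg (ρ · s.2) (hg.ly1 p.1 q.1 r.1)
      + hh.ly2 p.2 q.2 r.2 s.2
  simp only [Dmap, R.ρ_add, R.ρ_zero, R.ρ_addv, R.ρ_subv, R.μ_addv, R.μ_subv, hh.tr_add1,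
    hh.tr_sub1, A.μ_ann_br, A.ρ_cent_tr1]
  abel

theorem semidirect_ly3 (p q r s : g × h) :
    sdTr brg trg trh ρ μ p q (sdBr brg brh ρ r s)
      = sdBr brg brh ρ (sdTr brg trg trh ρ μ p q r) s
        + sdBr brg brh ρ r (sdTr brg trg trh ρ μ p q s) := by
  refine Prod.ext (hg.ly3 ..) ?_
  obtain R := A.rep
  simp only [sdBr, sdTr, Prod.snd_add]
  linear_combination (norm := skip)
    R.rep2 q.1 r.1 s.1 p.2 - R.rep2 p.1 r.1 s.1 q.2
      - R.rep3 p.1 q.1 r.1 s.2 + R.rep3 p.1 q.1 s.1 r.2 + hh.ly3 p.2 q.2 r.2 s.2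
  simp only [Dmap, R.ρ_addv, R.ρ_zerov, R.ρ_subv, R.μ_addv, R.μ_subv, hh.br_add_left,
    hh.br_sub_left, hh.br_add_right, hh.br_sub_right, hh.tr_add3, hh.tr_sub3, A.ρ_cent_br,
    A.ρ_ann_br, A.ρ_cent_br_right hh, A.μ_cent_br, A.μ_ann_br, A.μ_cent_br_right hh,
    A.ρ_cent_tr3, A.ρ_ann_tr]
  abel

theorem semidirect_ly4 (p q r s t : g × h) :
    sdTr brg trg trh ρ μ p q (sdTr brg trg trh ρ μ r s t)
      = sdTr brg trg trh ρ μ (sdTr brg trg trh ρ μ p q r) s t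
        + sdTr brg trg trh ρ μ r (sdTr brg trg trh ρ μ p q s) t
        + sdTr brg trg trh ρ μ r s (sdTr brg trg trh ρ μ p q t) := by
  refine Prod.ext (hg.ly4 ..) ?_
  obtain R := A.rep
  simp only [sdTr, Prod.snd_add]
  linear_combination (norm := skip)
    R.rep4 p.1 r.1 s.1 t.1 q.2 - R.rep4 q.1 r.1 s.1 t.1 p.2
      + R.rep5 p.1 q.1 r.1 s.1 t.2 + R.rep5 p.1 q.1 r.1 t.1 s.2
      - R.rep5 p.1 q.1 s.1 r.1 t.2 - R.rep5 p.1 q.1 s.1 t.1 r.2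
      + R.rep3 p.1 q.1 s.1 (ρ r.1 t.2) - R.rep3 p.1 q.1 r.1 (ρ s.1 t.2)
      + congrArg (ρ s.1) (R.rep3 p.1 q.1 r.1 t.2) - congrArg (ρ r.1) (R.rep3 p.1 q.1 s.1 t.2)
      + R.rep3 p.1 q.1 (brg r.1 s.1) t.2 - congrArg (ρ · t.2) (hg.ly3 p.1 q.1 r.1 s.1)
      + hh.ly4 p.2 q.2 r.2 s.2 t.2
  simp only [Dmap, R.ρ_add, R.ρ_addv, R.ρ_zerov, R.ρ_subv, R.μ_addv, R.μ_subv, hh.tr_add1,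
    hh.tr_sub1, hh.tr_add2, hh.tr_sub2, hh.tr_add3, hh.tr_sub3, A.ρ_cent_tr1, A.ρ_cent_tr2 hh,
    A.ρ_cent_tr3, A.μ_cent_tr1, A.μ_cent_tr2 hh, A.μ_cent_tr3, A.ρ_ann_tr, A.μ_ann_tr]
  abel

theorem isLYA_semidirect : IsLYA K (g × h) (sdBr brg brh ρ) (sdTr brg trg trh ρ μ) where
  br_add_left p q r := Prod.ext (hg.br_add_left ..) <| by
    simp only [sdBr, Prod.fst_add, Prod.snd_add, A.rep.ρ_add, A.rep.ρ_addv, hh.br_add_left]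
    abel
  br_smul_left a p q := Prod.ext (hg.br_smul_left ..) <| by
    simp only [sdBr, Prod.smul_fst, Prod.smul_snd, A.rep.ρ_smul, A.rep.ρ_smulv, hh.br_smul_left]
    module
  br_add_right p q r := Prod.ext (hg.br_add_right ..) <| by
    simp only [sdBr, Prod.fst_add, Prod.snd_add, A.rep.ρ_add, A.rep.ρ_addv, hh.br_add_right]
    abel
  br_smul_right a p q := Prod.ext (hg.br_smul_right ..) <| by
    simp only [sdBr, Prod.smul_fst, Prod.smul_snd, A.rep.ρ_smul, A.rep.ρ_smulv, hh.br_smul_right]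
    module
  tr_add1 p p' q r := Prod.ext (hg.tr_add1 ..) <| by
    simp only [sdTr, Dmap, Prod.fst_add, Prod.snd_add, A.rep.ρ_add, A.rep.ρ_addv, A.rep.μ_add1,
      A.rep.μ_add2, A.rep.μ_addv, hg.br_add_left, hh.tr_add1]; abel
  tr_smul1 a p q r := Prod.ext (hg.tr_smul1 ..) <| by
    simp only [sdTr, Dmap, Prod.smul_fst, Prod.smul_snd, A.rep.ρ_smul, A.rep.ρ_smulv,
      A.rep.μ_smul1, A.rep.μ_smul2, A.rep.μ_smulv, hg.br_smul_left, hh.tr_smul1]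
    module
  tr_add2 p q q' r := Prod.ext (hg.tr_add2 ..) <| by
    simp only [sdTr, Dmap, Prod.fst_add, Prod.snd_add, A.rep.ρ_add, A.rep.ρ_addv, A.rep.μ_add1,
      A.rep.μ_add2, A.rep.μ_addv, hg.br_add_right, hh.tr_add2]; abel
  tr_smul2 a p q r := Prod.ext (hg.tr_smul2 ..) <| by
    simp only [sdTr, Dmap, Prod.smul_fst, Prod.smul_snd, A.rep.ρ_smul, A.rep.ρ_smulv,
      A.rep.μ_smul1, A.rep.μ_smul2, A.rep.μ_smulv, hg.br_smul_right, hh.tr_smul2]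
    module
  tr_add3 p q r r' := Prod.ext (hg.tr_add3 ..) <| by
    simp only [sdTr, Dmap, Prod.fst_add, Prod.snd_add, A.rep.ρ_addv, A.rep.μ_add2, A.rep.μ_addv,
      hh.tr_add3]; abel
  tr_smul3 a p q r := Prod.ext (hg.tr_smul3 ..) <| by
    simp only [sdTr, Dmap, Prod.smul_fst, Prod.smul_snd, A.rep.ρ_smulv, A.rep.μ_smul2,
      A.rep.μ_smulv, hh.tr_smul3]
    module
  br_skew p q := Prod.ext (hg.br_skew ..) <| by
    simp only [sdBr, Prod.snd_neg, hh.br_skew p.2 q.2]; abel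
  tr_skew p q r := Prod.ext (hg.tr_skew ..) <| by
    simp only [sdTr, Dmap, Prod.snd_neg, hg.br_skew p.1 q.1, A.rep.ρ_neg, hh.tr_skew p.2 q.2]
    abel
  ly1 := semidirect_ly1 hg hh A
  ly2 := semidirect_ly2 hg hh A
  ly3 := semidirect_ly3 hg hh A
  ly4 := semidirect_ly4 hg hh A

end IsLYAction


namespace IsRelRB

variable {K g h : Type*} [Field K] [AddCommGroup g] [Module K g] [AddCommGroup h] [Module K h]
  {brg : g → g → g} {trg : g → g → g → g} {brh : h → h → h} {trh : h → h → h → h}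
  {ρ : g → h → h} {μ : g → g → h → h} {T : h →ₗ[K] g}
  (hT : IsRelRB K brg trg brh trh ρ μ T)
include hT

theorem map_brT (u v : h) : T (brT brh ρ T u v) = brg (T u) (T v) :=
  (hT.1 u v).symm

theorem map_trT (u v w : h) : T (trT brg trh ρ μ T u v w) = trg (T u) (T v) (T w) :=
  (hT.2 u v w).symm

theorem graph_brT (u v : h) :
    T.prod LinearMap.id (brT brh ρ T u v)
      = sdBr brg brh ρ (T.prod LinearMap.id u) (T.prod LinearMap.id v) :=
  Prod.ext (hT.map_brT u v) rfl

theorem graph_trT (u v w : h) :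
    T.prod LinearMap.id (trT brg trh ρ μ T u v w)
      = sdTr brg trg trh ρ μ (T.prod LinearMap.id u) (T.prod LinearMap.id v)
          (T.prod LinearMap.id w) :=
  Prod.ext (hT.map_trT u v w) rfl

end IsRelRB

/-- the descent brackets form a Lie-Yamaguti algebra on `h`, and `T` is a
Lie-Yamaguti algebra homomorphism from the descent algebra to `g`. -/
theorem descent_isLYA_and_hom (K : Type*) [Field K]
    (g : Type*) [AddCommGroup g] [Module K g] (h : Type*) [AddCommGroup h] [Module K h]
    (brg : g → g → g) (trg : g → g → g → g) (brh : h → h → h) (trh : h → h → h → h)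
    (ρ : g → h → h) (μ : g → g → h → h)
    (hg : IsLYA K g brg trg) (hh : IsLYA K h brh trh)
    (hact : IsLYAction K g h brg trg brh trh ρ μ) (T : h →ₗ[K] g)
    (hT : IsRelRB K brg trg brh trh ρ μ T) :
    IsLYA K h (brT brh ρ T) (trT brg trh ρ μ T) ∧
      (∀ u v : h, T (brT brh ρ T u v) = brg (T u) (T v)) ∧
      (∀ u v w : h, T (trT brg trh ρ μ T u v w) = trg (T u) (T v) (T w)) := by
  have graph_injective : Function.Injective (T.prod LinearMap.id) :=
    fun u v huv => congrArg Prod.snd huv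
  exact ⟨(hact.isLYA_semidirect hg hh).of_injective _ graph_injective hT.graph_brT hT.graph_trT,
    hT.map_brT, hT.map_trT⟩
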